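/- arXiv:2204.08300 — 2 statements merged into one kernel-verified Lean document; each statement's English description precedes it below -/
import Mathlib

section
/- For any priority π, the draft rule φ^π is respectful of the priority π: for every problem (≿, X) and agents i, j with π(i) < π(j), one has φ^π_i(≿, X) ≿_i^PD φ^π_j(≿, X). -/
open Finset

noncomputable section

abbrev Obj := ℕ

def PD (r : Obj → Obj → Prop) (S T : Finset Obj) : Prop :=
  ∃ μ : {x // x ∈ T} → {x // x ∈ S}, Function.Injective μ ∧ ∀ x, r (μ x).1 x.1

def StrictPD (r : Obj → Obj → Prop) (S T : Finset Obj) : Prop :=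
  PD r S T ∧ ¬ PD r T S

def LinProfile {n : ℕ} (pref : Fin n → Obj → Obj → Prop) : Prop :=
  ∀ i, IsLinearOrder Obj (pref i)

def IsAlloc {n : ℕ} (A : Fin n → Finset Obj) (X : Finset Obj) : Prop :=
  (∀ i, A i ⊆ X) ∧ ∀ i j, i ≠ j → Disjoint (A i) (A j)

open Classical in
def topOf (r : Obj → Obj → Prop) (X : Finset Obj) : Obj :=
  if h : ∃ m ∈ X, ∀ x ∈ X, r m x then h.choose else 0

def remaining {n : ℕ} (pref : Fin n → Obj → Obj → Prop) (f : ℕ → Fin n)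
    (X : Finset Obj) : ℕ → Finset Obj
  | 0 => X
  | k + 1 => (remaining pref f X k).erase (topOf (pref (f k)) (remaining pref f X k))

def draft {n : ℕ} (pref : Fin n → Obj → Obj → Prop) (f : ℕ → Fin n)
    (X : Finset Obj) (i : Fin n) : Finset Obj :=
  ((Finset.range X.card).filter (fun k => f k = i)).image
    (fun k => topOf (pref (f k)) (remaining pref f X k))

def roundRobin {n : ℕ} (hn : 0 < n) (π : Equiv.Perm (Fin n)) (k : ℕ) : Fin n :=
  π.symm ⟨k % n, Nat.mod_lt k hn⟩

def draftPi {n : ℕ} (hn : 0 < n) (pref : Fin n → Obj → Obj → Prop)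
    (π : Equiv.Perm (Fin n)) (X : Finset Obj) (i : Fin n) : Finset Obj :=
  draft pref (roundRobin hn π) X i

/-!
Whenever `j` picks at turn `k` of the round-robin sequence, `i` picked at turn
`k - (π j - π i)`, when the remaining pool was larger. Distinct turns yield distinct items, so
matching each item of `j` with `i`'s pick at the shifted turn is injective, and `i` weakly
prefers that pick to `j`'s item, which was still available when `i` chose.
-/

lemma exists_forall_rel_of_nonempty {α : Type*} (r : α → α → Prop) [Std.Total r]
    [IsTrans α r] {S : Finset α} (hS : S.Nonempty) : ∃ m ∈ S, ∀ x ∈ S, r m x := by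
  induction hS using Finset.Nonempty.cons_induction with
  | singleton a => exact ⟨a, mem_singleton_self a, by simp [refl_of r a]⟩
  | cons a S _ _ ih =>
    obtain ⟨m, hm, hmin⟩ := ih
    rcases total_of r a m with ham | hma
    · refine ⟨a, mem_cons_self a S, ?_⟩
      simpa [refl_of r a] using fun x hx => trans_of r ham (hmin x hx)
    · exact ⟨m, mem_cons_of_mem hm, by simpa [hma] using hmin⟩

section topOf

variable (r : Obj → Obj → Prop) [IsLinearOrder Obj r] {S : Finset Obj}

lemma topOf_spec (hS : S.Nonempty) : topOf r S ∈ S ∧ ∀ x ∈ S, r (topOf r S) x := by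
  have h := exists_forall_rel_of_nonempty r hS
  rw [topOf, dif_pos h]
  exact h.choose_spec

lemma topOf_mem (hS : S.Nonempty) : topOf r S ∈ S := (topOf_spec r hS).1

lemma rel_topOf {x : Obj} (hx : x ∈ S) : r (topOf r S) x := (topOf_spec r ⟨x, hx⟩).2 x hx

end topOf

section draft

variable {n : ℕ} (pref : Fin n → Obj → Obj → Prop) (f : ℕ → Fin n) (X : Finset Obj)

def pick (k : ℕ) : Obj := topOf (pref (f k)) (remaining pref f X k)

lemma mem_draft {i : Fin n} {x : Obj} :
    x ∈ draft pref f X i ↔ ∃ k < X.card, f k = i ∧ pick pref f X k = x := by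
  simp only [draft, pick, mem_image, mem_filter, mem_range, and_assoc]

lemma remaining_antitone : Antitone (remaining pref f X) :=
  antitone_nat_of_succ_le fun _ => erase_subset _ _

variable {pref} (hpref : LinProfile pref)
include hpref

lemma card_remaining {k : ℕ} (hk : k ≤ X.card) : (remaining pref f X k).card = X.card - k := by
  induction k with
  | zero => rfl
  | succ k ih =>
    have hne : (remaining pref f X k).Nonempty := by
      rw [← card_pos, ih (by omega)]; omega
    have := hpref (f k)
    rw [remaining, card_erase_of_mem (topOf_mem _ hne), ih (by omega)]
    omega

lemma pick_mem_remaining {k : ℕ} (hk : k < X.card) :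
    pick pref f X k ∈ remaining pref f X k := by
  have := hpref (f k)
  exact topOf_mem _ (card_pos.1 (by rw [card_remaining f X hpref hk.le]; omega))

lemma pick_ne_of_lt {k₁ k₂ : ℕ} (h : k₁ < k₂) (hk₂ : k₂ < X.card) :
    pick pref f X k₁ ≠ pick pref f X k₂ := by
  have hmem :=
    remaining_antitone pref f X (Nat.succ_le_of_lt h) (pick_mem_remaining f X hpref hk₂)
  exact fun heq => (mem_erase.1 hmem).1 heq.symm

lemma pick_injOn : Set.InjOn (pick pref f X) (Set.Iio X.card) := by
  intro k₁ hk₁ k₂ hk₂ heq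
  rcases lt_trichotomy k₁ k₂ with h | h | h
  · exact absurd heq (pick_ne_of_lt f X hpref h hk₂)
  · exact h
  · exact absurd heq.symm (pick_ne_of_lt f X hpref h hk₁)

theorem PD_draft_of_earlier_turns {i j : Fin n} (g : ℕ → ℕ)
    (hg_le : ∀ k, f k = j → g k ≤ k) (hg_turn : ∀ k, f k = j → f (g k) = i)
    (hg_inj : Set.InjOn g {k | f k = j}) :
    PD (pref i) (draft pref f X i) (draft pref f X j) := by
  have hturn (x : {x // x ∈ draft pref f X j}) := (mem_draft pref f X).1 x.2
  choose t ht_lt ht_turn ht_pick using hturn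
  have hgt_lt (x) : g (t x) < X.card := (hg_le _ (ht_turn x)).trans_lt (ht_lt x)
  refine ⟨fun x => ⟨pick pref f X (g (t x)),
    (mem_draft pref f X).2 ⟨_, hgt_lt x, hg_turn _ (ht_turn x), rfl⟩⟩, ?_, ?_⟩
  · intro x y hxy
    have hg : g (t x) = g (t y) :=
      pick_injOn f X hpref (hgt_lt x) (hgt_lt y) (congrArg Subtype.val hxy)
    have ht : t x = t y := hg_inj (ht_turn x) (ht_turn y) hg
    exact Subtype.ext (by rw [← ht_pick x, ← ht_pick y, ht])
  · intro x
    have := hpref i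
    have hx : x.1 ∈ remaining pref f X (g (t x)) := by
      rw [← ht_pick x]
      exact remaining_antitone pref f X (hg_le _ (ht_turn x))
        (pick_mem_remaining f X hpref (ht_lt x))
    simpa only [pick, hg_turn _ (ht_turn x)] using rel_topOf _ hx

end draft

lemma roundRobin_eq_iff {n : ℕ} (hn : 0 < n) (π : Equiv.Perm (Fin n)) (k : ℕ) (i : Fin n) :
    roundRobin hn π k = i ↔ k % n = π i := by
  rw [roundRobin, Equiv.symm_apply_eq, Fin.ext_iff]

lemma roundRobin_sub {n : ℕ} (hn : 0 < n) (π : Equiv.Perm (Fin n)) {i j : Fin n}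
    (hij : π i ≤ π j) {k : ℕ} (hk : roundRobin hn π k = j) :
    roundRobin hn π (k - (π j - π i : ℕ)) = i := by
  rw [roundRobin_eq_iff] at hk ⊢
  have hk' : k = n * (k / n) + π j := by rw [← hk, Nat.div_add_mod]
  have hi : (π i : ℕ) < n := (π i).isLt
  rw [show k - (π j - π i : ℕ) = π i + n * (k / n) by omega, Nat.add_mul_mod_self_left,
    Nat.mod_eq_of_lt hi]

theorem draft_respects_priority_general {n : ℕ} (hn : 0 < n) (π : Equiv.Perm (Fin n))
    (pref : Fin n → Obj → Obj → Prop) (hpref : LinProfile pref)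
    (X : Finset Obj) (i j : Fin n) (hij : π i < π j) :
    PD (pref i) (draftPi hn pref π X i) (draftPi hn pref π X j) := by
  have hturn_ge (k : ℕ) (hk : roundRobin hn π k = j) : (π j - π i : ℕ) ≤ k := by
    have := Nat.mod_le k n
    rw [(roundRobin_eq_iff hn π k j).1 hk] at this
    omega
  refine PD_draft_of_earlier_turns _ X hpref (fun k => k - (π j - π i : ℕ))
    (fun k _ => Nat.sub_le _ _) (fun k hk => roundRobin_sub hn π hij.le hk) ?_
  intro k₁ hk₁ k₂ hk₂ heq
  have := hturn_ge k₁ hk₁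
  have := hturn_ge k₂ hk₂
  simp only at heq
  omega

theorem draft_respects_priority {n : ℕ} (hn : 0 < n) (π : Equiv.Perm (Fin n))
    (pref : Fin n → Obj → Obj → Prop) (hpref : LinProfile pref)
    (X : Finset Obj) (hX : X.Nonempty) (i j : Fin n) (hij : π i < π j) :
    PD (pref i) (draftPi hn pref π X i) (draftPi hn pref π X j) :=
  draft_respects_priority_general hn π pref hpref X i j hij
end
end

section
/- There is no allocation rule satisfying Pareto efficiency with respect to pairwise dominance, envy-freeness up to one object, and weak strategy-proofness, for any number n ≥ 2 of agents. -/
open Finset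

noncomputable section

/-!
Take `n = m + 2` agents and the objects `0, …, 2n - 1`. Agents `0` and `1` rank the core
`{0, 1, 2, 3}` above everything else, and every other agent `k` ranks `2k, 2k + 1` on top.
Efficiency makes every object allocated and EF1 keeps all bundle sizes within one of each other,
so every bundle has size two; efficiency then hands every agent `k ≥ 2` its favourites, and
only the split of the core between agents `0` and `1` is left open.

Under the truthful preferences `0 ≻ 1 ≻ 2 ≻ 3` and `3 ≻ 1 ≻ 2 ≻ 0`, the efficient EF1 splits give
agent `0` either `{0, 1}` or `{0, 2}`. In the first case agent `1` reports `1 ≻ 0 ≻ 3 ≻ 2`, which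
forces it to receive `{1, 3}`, truly better than `{2, 3}`; in the second case agent `0` reports
`1 ≻ 3 ≻ 0 ≻ 2`, which forces it to receive `{0, 1}`, truly better than `{0, 2}`.
-/

section PairwiseDominance

variable {r : Obj → Obj → Prop}

instance (r : Obj → Obj → Prop) [DecidableRel r] (S T : Finset Obj) : Decidable (PD r S T) := by
  unfold PD; infer_instance

lemma PD.card_le {S T : Finset Obj} (h : PD r S T) : T.card ≤ S.card := by
  obtain ⟨μ, hμ, -⟩ := h
  simpa using Fintype.card_le_of_injective μ hμ

lemma PD.of_subset (hr : ∀ a, r a a) {S T : Finset Obj} (h : T ⊆ S) : PD r S T :=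
  ⟨fun x => ⟨x, h x.2⟩, fun _ _ hxy => Subtype.ext (Subtype.mk.inj hxy), fun x => hr x⟩

lemma PD.of_forall_of_card_le {S T : Finset Obj} (hST : ∀ s ∈ S, ∀ t ∈ T, r s t)
    (hcard : T.card ≤ S.card) : PD r S T := by
  obtain ⟨μ⟩ := Function.Embedding.nonempty_of_card_le (α := T) (β := S) (by simpa using hcard)
  exact ⟨μ, μ.injective, fun x => hST _ (μ x).2 _ x.2⟩

lemma PD.union {S₁ S₂ T₁ T₂ : Finset Obj} (h₁ : PD r S₁ T₁) (h₂ : PD r S₂ T₂)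
    (hS : Disjoint S₁ S₂) : PD r (S₁ ∪ S₂) (T₁ ∪ T₂) := by
  classical
  obtain ⟨μ₁, hinj₁, hr₁⟩ := h₁
  obtain ⟨μ₂, hinj₂, hr₂⟩ := h₂
  have hT₂ {x : Obj} (hx : x ∈ T₁ ∪ T₂) (hx₁ : x ∉ T₁) : x ∈ T₂ :=
    (mem_union.1 hx).resolve_left hx₁
  refine ⟨fun x => if hx : x.1 ∈ T₁ then ⟨μ₁ ⟨x, hx⟩, mem_union_left _ (μ₁ _).2⟩
      else ⟨μ₂ ⟨x, hT₂ x.2 hx⟩, mem_union_right _ (μ₂ _).2⟩, ?_, fun x => ?_⟩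
  · rintro ⟨x, hx⟩ ⟨y, hy⟩ hxy
    have hval := congrArg Subtype.val hxy
    dsimp only at hval
    split_ifs at hval with hx₁ hy₁ hy₁
    · simpa using hinj₁ (Subtype.ext hval)
    · exact absurd hval (disjoint_iff_ne.1 hS _ (μ₁ _).2 _ (μ₂ _).2)
    · exact absurd hval.symm (disjoint_iff_ne.1 hS _ (μ₁ _).2 _ (μ₂ _).2)
    · simpa using hinj₂ (Subtype.ext hval)
  · dsimp only
    split_ifs
    exacts [hr₁ _, hr₂ _]

lemma PD.of_inter_subset (hr : ∀ a, r a a) {C S T : Finset Obj} (hC : ∀ c ∈ C, ∀ x ∉ C, r c x)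
    (hSC : S ⊆ C) (hTS : T ∩ C ⊆ S) (hcard : T.card ≤ S.card) : PD r S T := by
  have hlow : PD r (S \ (T ∩ C)) (T \ C) := by
    refine PD.of_forall_of_card_le (fun s hs t ht => hC s (hSC (mem_sdiff.1 hs).1) t
      (mem_sdiff.1 ht).2) ?_
    have := card_sdiff_add_card_eq_card hTS
    have := card_sdiff_add_card_inter T C
    omega
  have h := (PD.of_subset hr (subset_refl (T ∩ C))).union hlow disjoint_sdiff
  rwa [union_sdiff_of_subset hTS, union_comm, sdiff_union_inter] at h

end PairwiseDominance

section Allocations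

variable {n : ℕ}

def ParetoEfficient (pref : Fin n → Obj → Obj → Prop) (X : Finset Obj)
    (A : Fin n → Finset Obj) : Prop :=
  ¬ ∃ B : Fin n → Finset Obj, IsAlloc B X ∧ B ≠ A ∧ ∀ i, PD (pref i) (B i) (A i)

def EF1 (pref : Fin n → Obj → Obj → Prop) (A : Fin n → Finset Obj) : Prop :=
  ∀ i j, ∃ S ⊆ A i, S.card ≤ 1 ∧ PD (pref j) (A j) (A i \ S)

lemma ParetoEfficient.biUnion_eq [NeZero n] {pref : Fin n → Obj → Obj → Prop}
    (hrefl : ∀ i a, pref i a a) {X : Finset Obj} {A : Fin n → Finset Obj} (hA : IsAlloc A X)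
    (hPE : ParetoEfficient pref X A) : univ.biUnion A = X := by
  refine (biUnion_subset.2 fun i _ => hA.1 i).antisymm fun x hx => ?_
  by_contra hfree
  simp only [mem_biUnion, mem_univ, true_and, not_exists] at hfree
  refine hPE ⟨Function.update A 0 (insert x (A 0)), ⟨fun i => ?_, fun i j hij => ?_⟩,
    fun h => ?_, fun i => ?_⟩
  · rcases eq_or_ne i 0 with rfl | hi
    · simpa using insert_subset hx (hA.1 0)
    · simpa [hi] using hA.1 i
  · rcases eq_or_ne i 0 with rfl | hi <;> rcases eq_or_ne j 0 with rfl | hj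
    · exact absurd rfl hij
    · simpa [hj] using ⟨hfree j, hA.2 _ _ hij⟩
    · simpa [hi] using ⟨hfree i, hA.2 _ _ hij⟩
    · simpa [hi, hj] using hA.2 _ _ hij
  · exact hfree 0 (by simpa using congrFun h 0 ▸ mem_insert_self x (A 0))
  · rcases eq_or_ne i 0 with rfl | hi
    · simpa using PD.of_subset (hrefl 0) (subset_insert x (A 0))
    · simpa [hi] using PD.of_subset (hrefl i) (subset_refl (A i))

lemma IsAlloc.sum_card {A : Fin n → Finset Obj} {X : Finset Obj} (hA : IsAlloc A X) :
    ∑ i, (A i).card = (univ.biUnion A).card :=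
  (card_biUnion fun i _ j _ hij => hA.2 i j hij).symm

lemma EF1.card_le_card_add_one {pref : Fin n → Obj → Obj → Prop} {A : Fin n → Finset Obj}
    (h : EF1 pref A) (i j : Fin n) : (A i).card ≤ (A j).card + 1 := by
  obtain ⟨S, hS, hS1, hPD⟩ := h i j
  have := hPD.card_le
  have := card_sdiff_add_card_eq_card hS
  omega

lemma eq_of_le_add_one_of_sum_eq {ι : Type*} [Fintype ι] {c : ι → ℕ} {k : ℕ}
    (hc : ∀ i j, c i ≤ c j + 1) (hsum : ∑ i, c i = Fintype.card ι * k) (i : ι) : c i = k := by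
  have hk : ∑ _ : ι, k = Fintype.card ι * k := by simp
  rcases lt_trichotomy (c i) k with h | h | h
  · have := sum_lt_sum (s := univ) (fun j _ => show c j ≤ k by have := hc j i; omega)
      ⟨i, mem_univ i, h⟩
    omega
  · exact h
  · have := sum_lt_sum (s := univ) (fun j _ => show k ≤ c j by have := hc i j; omega)
      ⟨i, mem_univ i, h⟩
    omega

end Allocations

section ListPreferences

def listRank (l : List Obj) (x : Obj) : ℕ :=
  if x ∈ l then l.idxOf x else l.length + x

def listPref (l : List Obj) (a b : Obj) : Prop :=
  listRank l a ≤ listRank l b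

instance (l : List Obj) : DecidableRel (listPref l) :=
  fun _ _ => Nat.decLe _ _

lemma listRank_lt_listRank {l : List Obj} {c x : Obj} (hc : c ∈ l) (hx : x ∉ l) :
    listRank l c < listRank l x := by
  simp only [listRank, hc, hx, if_true, if_false]
  have := List.idxOf_lt_length_of_mem hc
  omega

lemma listRank_injective (l : List Obj) : Function.Injective (listRank l) := by
  intro x y h
  by_cases hx : x ∈ l <;> by_cases hy : y ∈ l
  · simpa [listRank, hx, hy, List.idxOf_inj hx] using h
  · exact absurd h (listRank_lt_listRank hx hy).ne
  · exact absurd h (listRank_lt_listRank hy hx).ne'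
  · simpa [listRank, hx, hy] using h

lemma isLinearOrder_listPref (l : List Obj) : IsLinearOrder Obj (listPref l) :=
  (listRank_injective l).isLinearOrder_onFun (r := (· ≤ ·))

lemma PD.listPref_of_inter_subset {l : List Obj} {S T : Finset Obj} (hS : S ⊆ l.toFinset)
    (hT : T ∩ l.toFinset ⊆ S) (hcard : T.card ≤ S.card) : PD (listPref l) S T :=
  PD.of_inter_subset (r := listPref l) (fun _ => le_refl _)
    (fun _ hc _ hx => (listRank_lt_listRank (List.mem_toFinset.1 hc) (by simpa using hx)).le)
    hS hT hcard

end ListPreferences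

section Construction

variable {m : ℕ}

def core : Finset Obj := range 4

lemma card_core : core.card = 4 := card_range 4

def objects (m : ℕ) : Finset Obj := range (2 * (m + 2))

def favourites (k : ℕ) : List ℕ := [2 * k, 2 * k + 1]

def profile (a b : List Obj) (k : Fin (m + 2)) : Obj → Obj → Prop :=
  listPref (if k = 0 then a else if k = 1 then b else favourites k)

def coreAlloc (S : Finset Obj) (k : Fin (m + 2)) : Finset Obj :=
  if k = 0 then S else if k = 1 then core \ S else (favourites k).toFinset

lemma linProfile_profile (a b : List Obj) : LinProfile (profile (m := m) a b) :=
  fun _ => isLinearOrder_listPref _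

lemma update_profile_zero (a a' b : List Obj) :
    Function.update (profile (m := m) a b) 0 (listPref a') = profile a' b := by
  funext k
  rcases eq_or_ne k 0 with rfl | h0 <;> simp [profile, *]

lemma update_profile_one (a b b' : List Obj) :
    Function.update (profile (m := m) a b) 1 (listPref b') = profile a b' := by
  funext k
  rcases eq_or_ne k 1 with rfl | h1 <;> simp [profile, *]

@[simp] lemma profile_zero (a b : List Obj) : profile (m := m) a b 0 = listPref a := by
  simp [profile]

@[simp] lemma profile_one (a b : List Obj) : profile (m := m) a b 1 = listPref b := by
  simp [profile]

@[simp] lemma coreAlloc_zero (S : Finset Obj) : coreAlloc (m := m) S 0 = S := by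
  simp [coreAlloc]

@[simp] lemma coreAlloc_one (S : Finset Obj) : coreAlloc (m := m) S 1 = core \ S := by
  simp [coreAlloc]

lemma two_le_val_of_ne_zero_of_ne_one {k : Fin (m + 2)} (h0 : k ≠ 0) (h1 : k ≠ 1) :
    2 ≤ k.val := by
  rw [Ne, Fin.ext_iff, Fin.val_zero] at h0
  rw [Ne, Fin.ext_iff, Fin.val_one] at h1
  omega

def coreOwner (S : Finset Obj) (x : ℕ) : ℕ :=
  if x ∈ S then 0 else if x < 4 then 1 else x / 2

lemma coreOwner_of_mem_coreAlloc {S : Finset Obj} (hS : S ⊆ core) {k : Fin (m + 2)} {x : ℕ}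
    (hx : x ∈ coreAlloc S k) : coreOwner S x = k.val := by
  unfold coreAlloc at hx
  split_ifs at hx with h0 h1
  · simp [coreOwner, hx, h0]
  · obtain ⟨hx4, hxS⟩ := mem_sdiff.1 hx
    simp [coreOwner, hxS, mem_range.1 hx4, h1]
  · have := two_le_val_of_ne_zero_of_ne_one h0 h1
    simp only [favourites, List.mem_toFinset, List.mem_cons, List.not_mem_nil, or_false] at hx
    have hxS : x ∉ S := fun h => by have := mem_range.1 (hS h); omega
    simp only [coreOwner, hxS, if_false]
    split_ifs <;> omega

lemma isAlloc_coreAlloc {S : Finset Obj} (hS : S ⊆ core) :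
    IsAlloc (coreAlloc (m := m) S) (objects m) := by
  refine ⟨fun k (x : ℕ) hx => ?_, fun i j hij => disjoint_left.2 fun (x : ℕ) hi hj => hij ?_⟩
  · have hk := coreOwner_of_mem_coreAlloc hS hx
    have := k.isLt
    rw [objects, mem_range]
    unfold coreOwner at hk
    split_ifs at hk with hxS
    · have := mem_range.1 (hS hxS); omega
    all_goals omega
  · exact Fin.ext
      ((coreOwner_of_mem_coreAlloc hS hi).symm.trans (coreOwner_of_mem_coreAlloc hS hj))

variable {a b : List Obj}

lemma PD.profile_coreAlloc (ha : a.toFinset = core) (hb : b.toFinset = core)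
    {A : Fin (m + 2) → Finset Obj} (hcard : ∀ i, (A i).card = 2) {S : Finset Obj}
    (hS₀ : A 0 ∩ core ⊆ S) (hS₁ : S ⊆ core \ A 1) (hScard : S.card = 2) (i : Fin (m + 2)) :
    PD (profile a b i) (coreAlloc S i) (A i) := by
  rcases eq_or_ne i 0 with rfl | h0
  · rw [profile_zero, coreAlloc_zero]
    rw [← ha] at hS₀ hS₁
    exact PD.listPref_of_inter_subset (hS₁.trans sdiff_subset) hS₀ (by rw [hcard, hScard])
  rcases eq_or_ne i 1 with rfl | h1
  · rw [profile_one, coreAlloc_one, ← hb]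
    refine PD.listPref_of_inter_subset sdiff_subset
      (fun x hx => mem_sdiff.2 ⟨(mem_inter.1 hx).2, fun hxS => ?_⟩) ?_
    · exact (mem_sdiff.1 (hS₁ hxS)).2 (mem_inter.1 hx).1
    · rw [hcard, card_sdiff_of_subset, hb, card_core, hScard]
      exact hb ▸ hS₁.trans sdiff_subset
  · simp only [profile, coreAlloc, h0, h1, if_false]
    refine PD.listPref_of_inter_subset subset_rfl inter_subset_right ?_
    rw [hcard, List.toFinset_card_of_nodup (by simp [favourites])]
    rfl

lemma exists_eq_coreAlloc (ha : a.toFinset = core) (hb : b.toFinset = core)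
    {A : Fin (m + 2) → Finset Obj} (hA : IsAlloc A (objects m))
    (hPE : ParetoEfficient (profile a b) (objects m) A) (hEF1 : EF1 (profile a b) A) :
    ∃ S ⊆ core, S.card = 2 ∧ A = coreAlloc S := by
  have hcard : ∀ i, (A i).card = 2 := by
    refine eq_of_le_add_one_of_sum_eq hEF1.card_le_card_add_one ?_
    rw [hA.sum_card, hPE.biUnion_eq (fun i x => show profile a b i x x from le_refl _) hA,
      objects, card_range, Fintype.card_fin, mul_comm]
  have hA₀ : A 0 ∩ core ⊆ core \ A 1 := fun x hx =>
    mem_sdiff.2 ⟨(mem_inter.1 hx).2, disjoint_left.1 (hA.2 0 1 zero_ne_one) (mem_inter.1 hx).1⟩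
  have hA₁ : (A 1 ∩ core).card ≤ 2 := (card_le_card inter_subset_left).trans (hcard 1).le
  obtain ⟨S, hS₀, hS₁, hScard⟩ := exists_subsuperset_card_eq hA₀
    ((card_le_card inter_subset_left).trans (hcard 0).le)
    (by rw [card_sdiff, card_core]; omega)
  refine ⟨S, hS₁.trans sdiff_subset, hScard, ?_⟩
  by_contra hne
  exact hPE ⟨coreAlloc S, isAlloc_coreAlloc (hS₁.trans sdiff_subset), Ne.symm hne,
    PD.profile_coreAlloc ha hb hcard hS₀ hS₁ hScard⟩

/-- Efficiency and EF1 for agents `0` and `1` alone, when everybody else keeps a fixed bundle.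
Unlike `ParetoEfficient`, this only quantifies over subsets of `core`, so it is decidable. -/
def IsCoreSplit (a b : List Obj) (S : Finset Obj) : Prop :=
  (¬ ∃ T ∈ core.powerset, T ≠ S ∧ PD (listPref a) T S ∧ PD (listPref b) (core \ T) (core \ S)) ∧
    EF1 (fun i => listPref (![a, b] i)) ![S, core \ S]

instance (a b : List Obj) (S : Finset Obj) : Decidable (IsCoreSplit a b S) := by
  unfold IsCoreSplit EF1; infer_instance

def coreSplits (a b : List Obj) : Finset (Finset Obj) :=
  (core.powersetCard 2).filter (IsCoreSplit a b)

lemma isCoreSplit_of_coreAlloc {S : Finset Obj}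
    (hPE : ParetoEfficient (profile (m := m) a b) (objects m) (coreAlloc S))
    (hEF1 : EF1 (profile (m := m) a b) (coreAlloc S)) : IsCoreSplit a b S := by
  refine ⟨fun ⟨T, hT, hTS, hPDa, hPDb⟩ => hPE ⟨coreAlloc T,
    isAlloc_coreAlloc (mem_powerset.1 hT), fun h => hTS (by simpa using congrFun h 0),
    fun i => ?_⟩, fun i j => ?_⟩
  · rcases eq_or_ne i 0 with rfl | h0
    · simpa using hPDa
    rcases eq_or_ne i 1 with rfl | h1
    · simpa using hPDb
    simp only [coreAlloc, h0, h1, if_false]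
    exact PD.of_subset (r := profile a b i) (fun _ => le_refl _) subset_rfl
  · have := hEF1 (![0, 1] i) (![0, 1] j)
    fin_cases i <;> fin_cases j <;> simpa using this

lemma exists_mem_coreSplits_eq_coreAlloc (ha : a.toFinset = core) (hb : b.toFinset = core)
    {A : Fin (m + 2) → Finset Obj} (hA : IsAlloc A (objects m))
    (hPE : ParetoEfficient (profile a b) (objects m) A) (hEF1 : EF1 (profile a b) A) :
    ∃ S ∈ coreSplits a b, A = coreAlloc S := by
  obtain ⟨S, hS, hScard, rfl⟩ := exists_eq_coreAlloc ha hb hA hPE hEF1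
  exact ⟨S, mem_filter.2 ⟨mem_powersetCard.2 ⟨hS, hScard⟩, isCoreSplit_of_coreAlloc hPE hEF1⟩,
    rfl⟩

end Construction

theorem impossibility_EFF_EF1_WSP {n : ℕ} (hn : 2 ≤ n) :
    ¬ ∃ φ : (Fin n → Obj → Obj → Prop) → Finset Obj → Fin n → Finset Obj,
      (∀ pref, LinProfile pref → ∀ X : Finset Obj, X.Nonempty →
        IsAlloc (φ pref X) X) ∧
      (∀ pref, LinProfile pref → ∀ X : Finset Obj, X.Nonempty →
        ¬ ∃ B : Fin n → Finset Obj, IsAlloc B X ∧ B ≠ φ pref X ∧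
          ∀ i, PD (pref i) (B i) (φ pref X i)) ∧
      (∀ pref, LinProfile pref → ∀ X : Finset Obj, X.Nonempty →
        ∀ i j : Fin n, ∃ S ⊆ φ pref X i, S.card ≤ 1 ∧
          PD (pref j) (φ pref X j) (φ pref X i \ S)) ∧
      (∀ pref, LinProfile pref → ∀ X : Finset Obj, X.Nonempty →
        ∀ i : Fin n, ∀ r' : Obj → Obj → Prop, IsLinearOrder Obj r' →
          ¬ StrictPD (pref i) (φ (Function.update pref i r') X i) (φ pref X i)) := by
  rintro ⟨φ, hAlloc, hPE, hEF1, hWSP⟩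
  obtain ⟨m, rfl⟩ : ∃ m, n = m + 2 := ⟨n - 2, by omega⟩
  have hX : (objects m).Nonempty := ⟨0, by simp [objects]⟩
  have hφ (a b : List Obj) (ha : a.toFinset = core) (hb : b.toFinset = core) :
      ∃ S ∈ coreSplits a b, φ (profile a b) (objects m) = coreAlloc S :=
    exists_mem_coreSplits_eq_coreAlloc ha hb (hAlloc _ (linProfile_profile a b) _ hX)
      (hPE _ (linProfile_profile a b) _ hX) (hEF1 _ (linProfile_profile a b) _ hX)
  obtain ⟨S, hS, hφS⟩ := hφ [0, 1, 2, 3] [3, 1, 2, 0] (by decide) (by decide)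
  obtain ⟨S₀, hS₀, hφS₀⟩ := hφ [1, 3, 0, 2] [3, 1, 2, 0] (by decide) (by decide)
  obtain ⟨S₁, hS₁, hφS₁⟩ := hφ [0, 1, 2, 3] [1, 0, 3, 2] (by decide) (by decide)
  rw [show coreSplits [0, 1, 2, 3] [3, 1, 2, 0] = {{0, 1}, {0, 2}} by decide, mem_insert,
    mem_singleton] at hS
  rw [show coreSplits [1, 3, 0, 2] [3, 1, 2, 0] = {{0, 1}} by decide, mem_singleton] at hS₀
  rw [show coreSplits [0, 1, 2, 3] [1, 0, 3, 2] = {{0, 2}} by decide, mem_singleton] at hS₁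
  have hWSP' := hWSP (profile [0, 1, 2, 3] [3, 1, 2, 0]) (linProfile_profile _ _) _ hX
  rcases hS with rfl | rfl
  · refine hWSP' 1 _ (isLinearOrder_listPref [1, 0, 3, 2]) ?_
    rw [update_profile_one, hφS₁, hφS, hS₁, profile_one, coreAlloc_one, coreAlloc_one]
    exact ⟨by decide, by decide⟩
  · refine hWSP' 0 _ (isLinearOrder_listPref [1, 3, 0, 2]) ?_
    rw [update_profile_zero, hφS₀, hφS, hS₀, profile_zero, coreAlloc_zero, coreAlloc_zero]
    exact ⟨by decide, by decide⟩
end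
end
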